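/- Fix an integer t ≥ 1. There exist a constant c ∈ ℕ and a decoder relation D : ℕ → ℕ → Prop such that for every n ≥ 2 and every n-vertex finite bipartite graph G with a given bipartition (U, W) containing no one-sided induced copy of F_{t,1} with its star centers in U (i.e., no induced subgraph isomorphic to the disjoint union of a star K_{1,t}, a single edge K₂, and one isolated vertex, in which the vertex of degree t lies in U and the isolated vertex lies in W), there is an injective labeling ℓ : V(G) → Fin (n ^ c) such that for all distinct vertices u, v of G, u and v are adjacent in G if and only if D (ℓ u) (ℓ v) holds. -/

import Mathlib

/-!
For `u` in the part `U` let `M u` be its set of non-neighbours in the part `W`. A one-sided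
induced `F_{t,1}` with centres `u₀, u₁` consists of `t` vertices of `M u₁ \ M u₀`, one vertex of
`M u₀ \ M u₁` and one of `M u₀ ∩ M u₁`. Hence, in an `F_{t,1}`-free graph, any two of the sets
`M u` are nested, disjoint, or differ by fewer than `t` elements on each side. Splitting such a
family around a largest member and recursing inside and outside it, one orders `W` so that every
`M u` is within symmetric difference `2t` of an interval. A vertex of `U` is then labelled by its
index, the endpoints of its interval and its at most `2t` exceptional vertices, a vertex of `W`
by its index and its position; these are `5 + 2t` numbers at most `n`, packed with `Nat.pair`
into one number below `n ^ (2 * 2 ^ (5 + 2t))`.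
-/

open SimpleGraph Finset
open scoped symmDiff

/-- `F_{t,p}`: two stars `K_{1,t}` and `K_{1,p}` with their centers (`inl 0` and `inl 1`)
in one part of the bipartition, plus an isolated vertex (`inr (t+p)`) in the other part.
In particular `F_{t,1}` is the disjoint union of `K_{1,t}` (center `inl 0`, the vertex of
degree `t`), a single edge `K₂` (its endpoint `inl 1` in the same part as the star
center), and the isolated vertex `inr (t+1)` in the opposite part. -/
def Ftp (t p : ℕ) : SimpleGraph (Fin 2 ⊕ Fin (t + p + 1)) :=
  SimpleGraph.fromRel fun u v =>
    match u, v with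
    | Sum.inl a, Sum.inr b => (a = 0 ∧ (b : ℕ) < t) ∨ (a = 1 ∧ t ≤ (b : ℕ) ∧ (b : ℕ) < t + p)
    | _, _ => False

namespace Nat

def encodeList (xs : List ℕ) : ℕ := xs.foldr Nat.pair 0

def decodeAt : ℕ → ℕ → ℕ
  | 0, x => x.unpair.1
  | k + 1, x => decodeAt k x.unpair.2

@[simp] lemma decodeAt_zero_right (k : ℕ) : decodeAt k 0 = 0 := by
  induction k with
  | zero => rfl
  | succ k ih => simpa [decodeAt] using ih

@[simp] lemma decodeAt_encodeList (k : ℕ) (xs : List ℕ) :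
    decodeAt k (encodeList xs) = xs.getD k 0 := by
  induction xs generalizing k with
  | nil => simp [encodeList]
  | cons x xs ih => cases k <;> simp_all [encodeList, decodeAt]

lemma encodeList_lt {m : ℕ} (hm : 1 ≤ m) {xs : List ℕ} (hxs : ∀ x ∈ xs, x < m) :
    encodeList xs < m ^ 2 ^ xs.length := by
  induction xs with
  | nil => simpa [encodeList]
  | cons x xs ih =>
    have hx : x < m ^ 2 ^ xs.length :=
      (hxs x (by simp)).trans_le (Nat.le_self_pow (by positivity) m)
    have hrest := ih fun y hy => hxs y (by simp [hy])
    calc encodeList (x :: xs) < (max x (encodeList xs) + 1) ^ 2 := pair_lt_max_add_one_sq _ _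
      _ ≤ (m ^ 2 ^ xs.length) ^ 2 := by gcongr; omega
      _ = m ^ 2 ^ (x :: xs).length := by rw [← pow_mul, List.length_cons, pow_succ]

lemma encodeList_lt_pow {n k : ℕ} (hn : 2 ≤ n) {xs : List ℕ} (hlen : xs.length ≤ k)
    (hxs : ∀ x ∈ xs, x ≤ n) : encodeList xs < n ^ (2 * 2 ^ k) :=
  calc encodeList xs < (n + 1) ^ 2 ^ xs.length :=
        encodeList_lt (by omega) fun x hx => Nat.lt_succ_of_le (hxs x hx)
    _ ≤ (n ^ 2) ^ 2 ^ k := by gcongr <;> nlinarith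
    _ = n ^ (2 * 2 ^ k) := by rw [← pow_mul]

end Nat

open Nat

section Intervals

variable {ι α : Type*} [DecidableEq α] {t : ℕ} {F : ι → Finset α} {s : Finset ι}

variable (t F s) in
def IsAlmostLaminar : Prop :=
  ∀ i ∈ s, ∀ j ∈ s, F i ⊆ F j ∨ F j ⊆ F i ∨ Disjoint (F i) (F j) ∨
    (#(F i \ F j) < t ∧ #(F j \ F i) < t)

lemma IsAlmostLaminar.mono {s' : Finset ι} (hF : IsAlmostLaminar t F s) (hs' : s' ⊆ s) :
    IsAlmostLaminar t F s' :=
  fun i hi j hj => hF i (hs' hi) j (hs' hj)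

lemma IsAlmostLaminar.card_symmDiff_le (hF : IsAlmostLaminar t F s) {i k : ι} (hi : i ∈ s)
    (hk : k ∈ s) (hcard : #(F i) ≤ #(F k)) (hss : ¬ F i ⊂ F k)
    (hdisj : Disjoint (F i) (F k) → F i = F k) : #(F i ∆ F k) ≤ 2 * t := by
  rcases hF i hi k hk with h | h | h | ⟨h₁, h₂⟩
  · simp [h.eq_of_not_ssubset hss]
  · simp [eq_of_subset_of_card_le h hcard]
  · simp [hdisj h]
  · calc #(F i ∆ F k) ≤ #(F i \ F k) + #(F k \ F i) := by
          rw [symmDiff_def, sup_eq_union]; exact card_union_le _ _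
      _ ≤ 2 * t := by omega

def appendPos (K : Finset α) (p q : α → ℕ) (x : α) : ℕ := if x ∈ K then p x else #K + q x

variable {K W : Finset α} {p q : α → ℕ}

lemma appendPos_lt (hKW : K ⊆ W) (hp : ∀ x ∈ K, p x < #K) (hq : ∀ x ∈ W \ K, q x < #(W \ K))
    {x : α} (hx : x ∈ W) : appendPos K p q x < #W := by
  have hcard := card_sdiff_of_subset hKW
  have hKW' := card_le_card hKW
  by_cases hxK : x ∈ K
  · simpa [appendPos, hxK] using (hp x hxK).trans_le hKW'
  · have := hq x (mem_sdiff.mpr ⟨hx, hxK⟩)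
    simp only [appendPos, hxK, if_false]
    omega

lemma filter_appendPos_of_le (hKW : K ⊆ W) {a b : ℕ} (hb : b ≤ #K) :
    {x ∈ W | a ≤ appendPos K p q x ∧ appendPos K p q x < b} = {x ∈ K | a ≤ p x ∧ p x < b} := by
  ext x
  rw [mem_filter, mem_filter]
  by_cases hxK : x ∈ K
  · simp [appendPos, hxK, hKW hxK]
  · simp only [appendPos, hxK, if_false, false_and, iff_false]
    omega

lemma filter_appendPos_add (hp : ∀ x ∈ K, p x < #K) {a b : ℕ} :
    {x ∈ W | #K + a ≤ appendPos K p q x ∧ appendPos K p q x < #K + b} =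
      {x ∈ W \ K | a ≤ q x ∧ q x < b} := by
  ext x
  rw [mem_filter, mem_filter, mem_sdiff]
  by_cases hxK : x ∈ K
  · have := hp x hxK
    simp only [appendPos, hxK, if_true, not_true, and_false, false_and, iff_false]
    omega
  · simp [appendPos, hxK]

theorem IsAlmostLaminar.exists_interval_approx (hF : IsAlmostLaminar t F s) (W : Finset α)
    (hFW : ∀ i ∈ s, F i ⊆ W) :
    ∃ (pos : α → ℕ) (a b : ι → ℕ), (∀ x ∈ W, pos x < #W) ∧ ∀ i ∈ s, a i ≤ b i ∧ b i ≤ #W ∧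
      #(F i ∆ {x ∈ W | a i ≤ pos x ∧ pos x < b i}) ≤ 2 * t := by
  classical
  induction s using Finset.strongInduction generalizing W with
  | H s ih =>
  rcases s.eq_empty_or_nonempty with rfl | hs
  · exact ⟨0, 0, 0, fun x hx => card_pos.mpr ⟨x, hx⟩, by simp⟩
  obtain ⟨k, hk, hmax⟩ := s.exists_max_image (fun i => #(F i)) hs
  set K := F k
  set s₁ := {i ∈ s | F i ⊂ K}
  set s₂ := {i ∈ s | Disjoint (F i) K ∧ F i ≠ K}
  have hKW : K ⊆ W := hFW k hk
  obtain ⟨p, a₁, b₁, hp, h₁⟩ := ih s₁ (filter_ssubset.mpr ⟨k, hk, by simp [K]⟩)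
    (hF.mono (filter_subset _ _)) K fun i hi => (mem_filter.mp hi).2.le
  obtain ⟨q, a₂, b₂, hq, h₂⟩ := ih s₂ (filter_ssubset.mpr ⟨k, hk, by simp [K]⟩)
    (hF.mono (filter_subset _ _)) (W \ K) fun i hi =>
      subset_sdiff.mpr ⟨hFW i (mem_filter.mp hi).1, (mem_filter.mp hi).2.1⟩
  refine ⟨appendPos K p q, fun i => if i ∈ s₁ then a₁ i else if i ∈ s₂ then #K + a₂ i else 0,
    fun i => if i ∈ s₁ then b₁ i else if i ∈ s₂ then #K + b₂ i else #K,
    fun x hx => appendPos_lt hKW hp hq hx, fun i hi => ?_⟩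
  have hcardK := card_le_card hKW
  have hcardW := card_sdiff_of_subset hKW
  by_cases hi₁ : i ∈ s₁
  · obtain ⟨hab, hb, hcard⟩ := h₁ i hi₁
    simp only [hi₁, if_true]
    exact ⟨hab, hb.trans hcardK, by rwa [filter_appendPos_of_le hKW hb]⟩
  by_cases hi₂ : i ∈ s₂
  · obtain ⟨hab, hb, hcard⟩ := h₂ i hi₂
    simp only [hi₁, hi₂, if_true, if_false]
    exact ⟨by omega, by omega, by rwa [filter_appendPos_add hp]⟩
  simp only [hi₁, hi₂, if_false]
  refine ⟨zero_le _, hcardK, ?_⟩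
  rw [filter_appendPos_of_le hKW le_rfl, filter_true_of_mem fun x hx => ⟨zero_le _, hp x hx⟩]
  simp only [s₁, s₂, mem_filter, hi, true_and, not_and, not_not] at hi₁ hi₂
  exact hF.card_symmDiff_le hi hk (hmax i hi) hi₁ hi₂

end Intervals

lemma Ftp_adj_inl_inr {t : ℕ} (a : Fin 2) (b : Fin (t + 1 + 1)) :
    (Ftp t 1).Adj (Sum.inl a) (Sum.inr b) ↔ (a = 0 ∧ (b : ℕ) < t) ∨ (a = 1 ∧ (b : ℕ) = t) := by
  simp only [Ftp, fromRel_adj, ne_eq, reduceCtorEq, not_false_eq_true, or_false, true_and]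
  omega

lemma Ftp_not_adj_inl_inl {t p : ℕ} (a a' : Fin 2) : ¬ (Ftp t p).Adj (Sum.inl a) (Sum.inl a') := by
  simp [Ftp]

lemma Ftp_not_adj_inr_inr {t p : ℕ} (b b' : Fin (t + p + 1)) :
    ¬ (Ftp t p).Adj (Sum.inr b) (Sum.inr b') := by
  simp [Ftp]

section Bipartite

variable {V : Type*} {G : SimpleGraph V} {side : V → Bool}

lemma exists_Ftp_embedding (hbip : ∀ u v, G.Adj u v → side u ≠ side v) {t : ℕ}
    {u₀ u₁ w' w'' : V} (g : Fin t ↪ V) (hu₀ : side u₀ = true) (hu₁ : side u₁ = true)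
    (hg : ∀ i, G.Adj u₀ (g i) ∧ ¬ G.Adj u₁ (g i)) (hw' : ¬ G.Adj u₀ w' ∧ G.Adj u₁ w')
    (hw'' : side w'' = false ∧ ¬ G.Adj u₀ w'' ∧ ¬ G.Adj u₁ w'') :
    ∃ f : Ftp t 1 ↪g G, side (f (Sum.inl 0)) = true ∧ side (f (Sum.inl 1)) = true ∧
      side (f (Sum.inr (Fin.last (t + 1)))) = false := by
  have side_of_adj {u w : V} (hu : side u = true) (h : G.Adj u w) : side w = false := by
    simpa [hu] using (hbip u w h).symm
  let leaves : Fin (t + 1 + 1) → V := Fin.snoc (Fin.snoc (α := fun _ => V) g w') w''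
  have hleaves (b : Fin (t + 1 + 1)) : (G.Adj u₀ (leaves b) ↔ (b : ℕ) < t) ∧
      (G.Adj u₁ (leaves b) ↔ (b : ℕ) = t) ∧ side (leaves b) = false := by
    induction b using Fin.lastCases with
    | last => simp [leaves, hw'']
    | cast b =>
      induction b using Fin.lastCases with
      | last => simp [leaves, hw', side_of_adj hu₁ hw'.2]
      | cast i => simp [leaves, hg, side_of_adj hu₀ (hg i).1, i.isLt.ne]
  have hcenters (a : Fin 2) : side (![u₀, u₁] a) = true := by fin_cases a <;> simp [hu₀, hu₁]
  have hu : u₀ ≠ u₁ := fun h => hw'.1 (h ▸ hw'.2)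
  have hinj : Function.Injective (Sum.elim ![u₀, u₁] leaves) := by
    refine Function.Injective.sumElim ?_ ?_ fun a b hab => ?_
    · intro a a' h
      fin_cases a <;> fin_cases a' <;> simp_all [hu.symm]
    · refine Fin.snoc_injective_of_injective (Fin.snoc_injective_of_injective g.injective ?_) ?_
      · rintro ⟨i, hi⟩
        exact hw'.1 (hi ▸ (hg i).1)
      · rintro ⟨b, hb⟩
        obtain ⟨h₀, h₁, -⟩ := hleaves b.castSucc
        simp only [leaves, Fin.snoc_castSucc, hb, Fin.val_castSucc, hw''.2.1, hw''.2.2,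
          false_iff] at h₀ h₁
        omega
    · simpa [hab, (hleaves b).2.2] using hcenters a
  have hcross (a : Fin 2) (b : Fin (t + 1 + 1)) :
      G.Adj (![u₀, u₁] a) (leaves b) ↔ (Ftp t 1).Adj (Sum.inl a) (Sum.inr b) := by
    rw [Ftp_adj_inl_inr]
    fin_cases a <;> simp [(hleaves b).1, (hleaves b).2.1]
  refine ⟨⟨⟨_, hinj⟩, ?_⟩, hu₀, hu₁, (hleaves _).2.2⟩
  rintro (a | b) (a' | b')
  · exact iff_of_false (fun h => hbip _ _ h (by simp [hcenters])) (Ftp_not_adj_inl_inl a a')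
  · exact hcross a b'
  · exact G.adj_comm _ _ |>.trans <| (hcross a' b).trans <| (Ftp t 1).adj_comm _ _
  · exact iff_of_false (fun h => hbip _ _ h (by simp [(hleaves _).2.2]))
      (Ftp_not_adj_inr_inr b b')

lemma adj_iff_of_cross (hbip : ∀ u v, G.Adj u v → side u ≠ side v) {D : V → V → Prop}
    (hcomm : ∀ u v, D u v ↔ D v u) (hsame : ∀ u v, side u = side v → ¬ D u v)
    (hcross : ∀ u v, side u = true → side v = false → (G.Adj u v ↔ D u v)) (u v : V) :
    G.Adj u v ↔ D u v := by
  cases hu : side u <;> cases hv : side v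
  · exact iff_of_false (fun h => hbip u v h (hu.trans hv.symm)) (hsame u v (hu.trans hv.symm))
  · exact G.adj_comm u v |>.trans <| (hcross v u hv hu).trans (hcomm v u)
  · exact hcross u v hu hv
  · exact iff_of_false (fun h => hbip u v h (hu.trans hv.symm)) (hsame u v (hu.trans hv.symm))

variable [Fintype V]

variable (side) in
def rightPart : Finset V := {w | side w = false}

variable (G side) [DecidableRel G.Adj] in
def rightNonNeighbors (u : V) : Finset V := {w ∈ rightPart side | ¬ G.Adj u w}

variable [DecidableRel G.Adj]

lemma mem_rightNonNeighbors {u w : V} :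
    w ∈ rightNonNeighbors G side u ↔ side w = false ∧ ¬ G.Adj u w := by
  simp [rightNonNeighbors, rightPart]

variable [DecidableEq V]

lemma exists_Ftp_embedding_of_card_sdiff (hbip : ∀ u v, G.Adj u v → side u ≠ side v) {t : ℕ}
    {u₀ u₁ : V} (hu₀ : side u₀ = true) (hu₁ : side u₁ = true)
    (hcard : t ≤ #(rightNonNeighbors G side u₁ \ rightNonNeighbors G side u₀))
    (hdiff : (rightNonNeighbors G side u₀ \ rightNonNeighbors G side u₁).Nonempty)
    (hinter : ¬ Disjoint (rightNonNeighbors G side u₀) (rightNonNeighbors G side u₁)) :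
    ∃ f : Ftp t 1 ↪g G, side (f (Sum.inl 0)) = true ∧ side (f (Sum.inl 1)) = true ∧
      side (f (Sum.inr (Fin.last (t + 1)))) = false := by
  set S := rightNonNeighbors G side u₁ \ rightNonNeighbors G side u₀
  let g : Fin t ↪ V :=
    (Fin.castLEEmb hcard).trans (S.equivFin.symm.toEmbedding.trans (Function.Embedding.subtype _))
  have hgS (i : Fin t) : g i ∈ S := (S.equivFin.symm _).2
  obtain ⟨w', hw'⟩ := hdiff
  obtain ⟨w'', hw''₀, hw''₁⟩ := not_disjoint_iff.mp hinter
  simp only [S, mem_sdiff, mem_rightNonNeighbors, not_and, not_not] at hgS hw'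
  rw [mem_rightNonNeighbors] at hw''₀ hw''₁
  exact exists_Ftp_embedding hbip g hu₀ hu₁ (fun i => ⟨(hgS i).2 (hgS i).1.1, (hgS i).1.2⟩)
    ⟨hw'.1.2, hw'.2 hw'.1.1⟩ ⟨hw''₀.1, hw''₀.2, hw''₁.2⟩

lemma isAlmostLaminar_rightNonNeighbors (hbip : ∀ u v, G.Adj u v → side u ≠ side v) {t : ℕ}
    (hfree : ¬ ∃ f : Ftp t 1 ↪g G, side (f (Sum.inl 0)) = true ∧ side (f (Sum.inl 1)) = true ∧
      side (f (Sum.inr (Fin.last (t + 1)))) = false) :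
    IsAlmostLaminar t (rightNonNeighbors G side) {u | side u = true} := by
  intro i hi j hj
  simp only [mem_filter, mem_univ, true_and] at hi hj
  by_contra! h
  obtain ⟨hij, hji, hinter, hcard⟩ := h
  by_cases hlt : #(rightNonNeighbors G side i \ rightNonNeighbors G side j) < t
  · exact hfree <| exists_Ftp_embedding_of_card_sdiff hbip hi hj (hcard hlt)
      (sdiff_nonempty.mpr hij) hinter
  · exact hfree <| exists_Ftp_embedding_of_card_sdiff hbip hj hi (not_lt.mp hlt)
      (sdiff_nonempty.mpr hji) (fun h => hinter h.symm)

end Bipartite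

lemma List.exists_getD_eq_succ_iff {L : List ℕ} {z : ℕ} :
    (∃ k, L.getD k 0 = z + 1) ↔ z + 1 ∈ L := by
  simp only [List.getD_eq_getElem?_getD, List.mem_iff_getElem?]
  constructor
  · rintro ⟨k, hk⟩
    refine ⟨k, ?_⟩
    cases h : L[k]? <;> simp_all
  · rintro ⟨k, hk⟩
    exact ⟨k, by simp [hk]⟩

/-- Field layout of a label: side bit, vertex index, position, interval endpoints, then the
exceptional vertices shifted by one, so that the default value `0` of `decodeAt` past the end of
the list is never read as an exception. -/
def leftCode (u a b : ℕ) (exc : List ℕ) : List ℕ := [1, u, 0, a, b] ++ exc.map (· + 1)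

def rightCode (w p : ℕ) : List ℕ := [0, w, p]

def crossAdj (x y : ℕ → ℕ) : Prop :=
  x 0 = 1 ∧ y 0 = 0 ∧ ((x 3 ≤ y 2 ∧ y 2 < x 4) ↔ ∃ k, x (5 + k) = y 1 + 1)

def labelAdj (x y : ℕ) : Prop :=
  crossAdj (decodeAt · x) (decodeAt · y) ∨ crossAdj (decodeAt · y) (decodeAt · x)

lemma labelAdj_comm {x y : ℕ} : labelAdj x y ↔ labelAdj y x := or_comm

lemma labelAdj_leftCode_rightCode {u a b w p : ℕ} {exc : List ℕ} :
    labelAdj (encodeList (leftCode u a b exc)) (encodeList (rightCode w p)) ↔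
      ((a ≤ p ∧ p < b) ↔ w ∈ exc) := by
  have hexc : (∃ k, (leftCode u a b exc).getD (5 + k) 0 = w + 1) ↔ w ∈ exc := by
    have (k : ℕ) : (leftCode u a b exc).getD (5 + k) 0 = (exc.map (· + 1)).getD k 0 := by
      rw [leftCode, List.getD_append_right _ _ _ _ (by simp)]
      simp
    simp only [this, List.exists_getD_eq_succ_iff]
    simp
  simp only [labelAdj, crossAdj, decodeAt_encodeList,
    show (rightCode w p).getD 1 0 = w from rfl, hexc]
  simp [leftCode, rightCode]

lemma not_labelAdj_leftCode {u a b u' a' b' : ℕ} {exc exc' : List ℕ} :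
    ¬ labelAdj (encodeList (leftCode u a b exc)) (encodeList (leftCode u' a' b' exc')) := by
  simp [labelAdj, crossAdj, leftCode]

lemma not_labelAdj_rightCode {w p w' p' : ℕ} :
    ¬ labelAdj (encodeList (rightCode w p)) (encodeList (rightCode w' p')) := by
  simp [labelAdj, crossAdj, rightCode]

theorem exists_injective_label {n t : ℕ} (hn : 2 ≤ n) {G : SimpleGraph (Fin n)}
    [DecidableRel G.Adj] {side : Fin n → Bool} (hbip : ∀ u v, G.Adj u v → side u ≠ side v)
    {pos a b : Fin n → ℕ}
    (hpos : ∀ w ∈ rightPart side, pos w < #(rightPart side))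
    (hab : ∀ u ∈ ({u | side u = true} : Finset (Fin n)), a u ≤ b u ∧ b u ≤ #(rightPart side) ∧
      #(rightNonNeighbors G side u ∆ {w ∈ rightPart side | a u ≤ pos w ∧ pos w < b u}) ≤ 2 * t) :
    ∃ ℓ : Fin n → Fin (n ^ (2 * 2 ^ (5 + 2 * t))), Function.Injective ℓ ∧
      ∀ u v, G.Adj u v ↔ labelAdj (ℓ u) (ℓ v) := by
  classical
  set W := rightPart side
  set E : Fin n → Finset (Fin n) :=
    fun u => rightNonNeighbors G side u ∆ {x ∈ W | a u ≤ pos x ∧ pos x < b u}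
  let code (v : Fin n) : List ℕ :=
    if side v then leftCode v (a v) (b v) ((E v).toList.map Fin.val) else rightCode v (pos v)
  have hW : #W ≤ n := card_le_univ W |>.trans_eq (Fintype.card_fin n)
  have hcode_lt (v : Fin n) : encodeList (code v) < n ^ (2 * 2 ^ (5 + 2 * t)) := by
    by_cases hv : side v
    · obtain ⟨hle, hb, hE⟩ : a v ≤ b v ∧ b v ≤ #W ∧ #(E v) ≤ 2 * t := hab v (by simpa using hv)
      refine encodeList_lt_pow hn (by simp [code, hv, leftCode]; omega) ?_
      simp [code, hv, leftCode]
      omega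
    · refine encodeList_lt_pow hn (by simp [code, hv, rightCode]; omega) ?_
      have := hpos v (by simpa [W, rightPart] using hv)
      simp [code, hv, rightCode]
      omega
  have hdecode (v : Fin n) : decodeAt 1 (encodeList (code v)) = v := by
    by_cases hv : side v <;> simp [code, hv, leftCode, rightCode]
  refine ⟨fun v => ⟨_, hcode_lt v⟩, fun u v h => Fin.ext ?_, ?_⟩
  · simpa [hdecode] using congrArg (decodeAt 1 ∘ Fin.val) h
  refine adj_iff_of_cross hbip
    (D := fun u v => labelAdj (encodeList (code u)) (encodeList (code v)))
    (fun _ _ => labelAdj_comm) (fun u v h => ?_) (fun u v hu hv => ?_)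
  · cases hu : side u
    · simpa [code, hu, ← h] using not_labelAdj_rightCode
    · simpa [code, hu, ← h] using not_labelAdj_leftCode
  · simp only [code, hu, hv, if_true, Bool.false_eq_true, if_false, labelAdj_leftCode_rightCode]
    have hmem : (v : ℕ) ∈ (E u).toList.map Fin.val ↔ v ∈ E u := by simp [Fin.val_inj]
    rw [hmem]
    simp only [E, W, rightPart, mem_symmDiff, mem_rightNonNeighbors, mem_filter, mem_univ,
      true_and, hv]
    tauto

theorem statement10_general (t : ℕ) :
    ∃ (c : ℕ) (D : ℕ → ℕ → Prop),
      ∀ n : ℕ, 2 ≤ n → ∀ (G : SimpleGraph (Fin n)) (side : Fin n → Bool),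
        (∀ u v : Fin n, G.Adj u v → side u ≠ side v) →
        (¬ ∃ f : Ftp t 1 ↪g G,
          side (f (Sum.inl 0)) = true ∧ side (f (Sum.inl 1)) = true ∧
          side (f (Sum.inr (Fin.last (t + 1)))) = false) →
        ∃ ℓ : Fin n → Fin (n ^ c), Function.Injective ℓ ∧
          ∀ u v : Fin n, u ≠ v → (G.Adj u v ↔ D (ℓ u).val (ℓ v).val) := by
  classical
  refine ⟨2 * 2 ^ (5 + 2 * t), labelAdj, fun n hn G side hbip hfree => ?_⟩
  obtain ⟨pos, a, b, hpos, hab⟩ :=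
    (isAlmostLaminar_rightNonNeighbors hbip hfree).exists_interval_approx (rightPart side)
      fun _ _ => filter_subset _ _
  obtain ⟨ℓ, hinj, hadj⟩ := exists_injective_label hn hbip hpos hab
  exact ⟨ℓ, hinj, fun u v _ => hadj u v⟩

/-- Bipartite graphs (with a given bipartition `(U, W)`, encoded by `side` with
`U = side ⁻¹' {true}` and `W = side ⁻¹' {false}`) containing no one-sided induced copy
of `F_{t,1}` with its star centers in `U` (and hence its isolated vertex in `W`) admit
an implicit representation. -/
theorem statement10 (t : ℕ) (ht : 1 ≤ t) :
    ∃ (c : ℕ) (D : ℕ → ℕ → Prop),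
      ∀ n : ℕ, 2 ≤ n → ∀ (G : SimpleGraph (Fin n)) (side : Fin n → Bool),
        (∀ u v : Fin n, G.Adj u v → side u ≠ side v) →
        (¬ ∃ f : Ftp t 1 ↪g G,
          side (f (Sum.inl 0)) = true ∧ side (f (Sum.inl 1)) = true ∧
          side (f (Sum.inr (Fin.last (t + 1)))) = false) →
        ∃ ℓ : Fin n → Fin (n ^ c), Function.Injective ℓ ∧
          ∀ u v : Fin n, u ≠ v → (G.Adj u v ↔ D (ℓ u).val (ℓ v).val) :=
  statement10_general t
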